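/- arXiv:math/0302071 — 2 statements merged into one kernel-verified Lean document; each statement's English description precedes it below -/
import Mathlib

section
/- (The paper's Lemma on theta functions, rank-one case.) Fix s > 0, let q = e^{−s}, and let γ(λ) := Σ_{n∈ℤ} e^{−sn²/2} e^{−sλn}. Then for every continuous function f : ℝ → ℂ which is periodic with period 2π/s and every ξ ∈ ℝ, the integral on the left converges absolutely and √(s/(2π)) ∫_{−∞}^{+∞} f(t) · e^{s(ξ+it)²/2} dt = (s/(2π)) ∫₀^{2π/s} f(t) · γ(ξ+it) dt. (The left side is ∫_{C_ξ} f q^{−λ²/2} dλ with the measure on C_ξ = {ξ+it} normalized so that ∫_{C_ξ} q^{−λ²/2} dλ = 1; the right side is ∫_{C_ξ/κQ∨} f γ dλ with the probability measure on the torus.) -/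
/-!
Cut the line `C_ξ` into translates of one period `[0, 2π/s]` and sum the translates of the
Gaussian. Since `f` is periodic it factors out of that sum, and Jacobi's transformation formula
(Poisson summation for a Gaussian) identifies the periodized Gaussian with `√(s/2π) · γ`.
-/

open MeasureTheory Finset Filter

/-- The theta function `γ(λ) = Σ_{n∈ℤ} e^{−sn²/2} e^{−sλn}`. -/
noncomputable def theta (s : ℝ) (lam : ℂ) : ℂ :=
  ∑' n : ℤ, Complex.exp (-(s : ℂ) * (n : ℂ) ^ 2 / 2) * Complex.exp (-(s : ℂ) * lam * (n : ℂ))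

open Complex Real

theorem integral_eq_integral_Ioc_tsum_add_zsmul {E : Type*} [NormedAddCommGroup E]
    [NormedSpace ℝ E] {T : ℝ} (hT : 0 < T) {F : ℝ → E} (hF : Integrable F) :
    ∫ t, F t = ∫ t in Set.Ioc 0 T, ∑' k : ℤ, F (t + k • T) := by
  have hdom := isAddFundamentalDomain_Ioc hT 0
  rw [zero_add] at hdom
  have hmeas : ∀ g : AddSubgroup.zmultiples T,
      AEStronglyMeasurable (fun t => F (g +ᵥ t)) (volume.restrict (Set.Ioc 0 T)) := fun g =>
    (hF.comp_add_left (g : ℝ)).aestronglyMeasurable.restrict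
  have hfin : ∑' g : AddSubgroup.zmultiples T, ∫⁻ t in Set.Ioc 0 T, ‖F (g +ᵥ t)‖ₑ ≠ ⊤ := by
    rw [← hdom.lintegral_eq_tsum'' (fun t => ‖F t‖ₑ)]
    exact hF.hasFiniteIntegral.ne
  let e : ℤ ≃ AddSubgroup.zmultiples T :=
    Equiv.ofBijective (fun k => ⟨k • T, k, rfl⟩) ⟨fun a b h => by
      simpa [hT.ne'] using congrArg Subtype.val h, fun ⟨_, k, hk⟩ => ⟨k, Subtype.ext hk⟩⟩
  rw [hdom.integral_eq_tsum'' F hF, ← integral_tsum hmeas hfin]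
  refine setIntegral_congr_fun measurableSet_Ioc fun t _ => ?_
  rw [← e.tsum_eq]
  simp [e, add_comm]

theorem Function.Periodic.integrable_mul {𝕜 : Type*} [NormedRing 𝕜] {f g : ℝ → 𝕜} {c : ℝ}
    (hper : Function.Periodic f c) (hc : c ≠ 0) (hf : Continuous f) (hg : Integrable g) :
    Integrable (fun t => f t * g t) := by
  obtain ⟨C, hC⟩ := isBounded_iff_forall_norm_le.mp (hper.isBounded_of_continuous hc hf)
  exact hg.bdd_mul hf.aestronglyMeasurable (.of_forall fun t => hC _ ⟨t, rfl⟩)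

theorem integrable_cexp_mul_sq_add_I_mul {s : ℝ} (hs : 0 < s) (ξ : ℂ) :
    Integrable fun t : ℝ => cexp (s * (ξ + I * t) ^ 2 / 2) := by
  have hquad : ∀ t : ℝ,
      s * (ξ + I * t) ^ 2 / 2 = -(s / 2 : ℂ) * t ^ 2 + s * ξ * I * t + s * ξ ^ 2 / 2 :=
    fun t => by linear_combination (s * t ^ 2 / 2 : ℂ) * I_sq
  simp_rw [hquad]
  exact integrable_cexp_quadratic (by simpa using hs) _ _

theorem tsum_cexp_sq_add_period_eq_sqrt_mul_theta {s : ℝ} (hs : 0 < s) (lam : ℂ) :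
    ∑' k : ℤ, cexp (s * (lam + I * ↑(k • (2 * π / s))) ^ 2 / 2) =
      √(s / (2 * π)) * theta s lam := by
  have ha : 0 < s / (2 * π) := by positivity
  have hsqrt : ((s / (2 * π) : ℝ) : ℂ) ^ (1 / 2 : ℂ) = √(s / (2 * π)) := by
    rw [sqrt_eq_rpow, ofReal_cpow ha.le]; norm_num
  have hjacobi := Complex.tsum_exp_neg_quadratic (a := (s / (2 * π) : ℝ))
    (by rwa [ofReal_re]) (-s * lam / (2 * π))
  rw [hsqrt] at hjacobi
  have hπ : (π : ℂ) ≠ 0 := ofReal_ne_zero.mpr pi_ne_zero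
  have hs' : (s : ℂ) ≠ 0 := ofReal_ne_zero.mpr hs.ne'
  have hsqrt_ne : (√(s / (2 * π)) : ℂ) ≠ 0 := ofReal_ne_zero.mpr (sqrt_pos.mpr ha).ne'
  calc ∑' k : ℤ, cexp (s * (lam + I * ↑(k • (2 * π / s))) ^ 2 / 2)
      = ∑' n : ℤ, cexp (-π / (s / (2 * π) : ℝ) * (n + I * (-s * lam / (2 * π))) ^ 2) := by
        refine tsum_congr fun n => congrArg cexp ?_
        push_cast [zsmul_eq_mul]
        field_simp
        linear_combination (s ^ 2 * lam ^ 2 + 4 * π ^ 2 * n ^ 2) * I_sq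
    _ = √(s / (2 * π)) * ∑' n : ℤ,
          cexp (-π * (s / (2 * π) : ℝ) * n ^ 2 + 2 * π * (-s * lam / (2 * π)) * n) := by
        rw [hjacobi, ← mul_assoc, mul_one_div_cancel hsqrt_ne, one_mul]
    _ = √(s / (2 * π)) * theta s lam := by
        refine congrArg _ (tsum_congr fun n => ?_)
        rw [← Complex.exp_add]
        push_cast
        field_simp

/-- **Lemma on theta functions** (rank-one case): the Gaussian integral over the
cycle `C_ξ` of a periodic function equals the integral over the torus against
the theta function. -/
theorem theta_lemma (s : ℝ) (hs : 0 < s) (f : ℝ → ℂ) (hf : Continuous f)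
    (hper : Function.Periodic f (2 * Real.pi / s)) (ξ : ℝ) :
    Integrable (fun t : ℝ =>
      f t * Complex.exp ((s : ℂ) * ((ξ : ℂ) + Complex.I * (t : ℂ)) ^ 2 / 2)) ∧
    ((Real.sqrt (s / (2 * Real.pi)) : ℝ) : ℂ) *
        ∫ t : ℝ, f t * Complex.exp ((s : ℂ) * ((ξ : ℂ) + Complex.I * (t : ℂ)) ^ 2 / 2) =
      ((s / (2 * Real.pi) : ℝ) : ℂ) *
        ∫ t in (0 : ℝ)..(2 * Real.pi / s), f t * theta s ((ξ : ℂ) + Complex.I * (t : ℂ)) := by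
  have hT : 0 < 2 * π / s := by positivity
  have hint := hper.integrable_mul hT.ne' hf (integrable_cexp_mul_sq_add_I_mul hs ξ)
  have hperiodize : ∀ t : ℝ,
      ∑' k : ℤ, f (t + k • (2 * π / s)) * cexp (s * (ξ + I * ↑(t + k • (2 * π / s))) ^ 2 / 2) =
        √(s / (2 * π)) * (f t * theta s (ξ + I * t)) := fun t => by
    simp_rw [hper.zsmul _ t, tsum_mul_left, ofReal_add, mul_add, ← add_assoc,
      tsum_cexp_sq_add_period_eq_sqrt_mul_theta hs]
    ring
  refine ⟨hint, ?_⟩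
  rw [integral_eq_integral_Ioc_tsum_add_zsmul hT hint, setIntegral_congr_fun measurableSet_Ioc
    fun t _ => hperiodize t, integral_const_mul, ← mul_assoc, ← ofReal_mul,
    mul_self_sqrt (by positivity), intervalIntegral.integral_of_le hT.le]
end

section
/- (Kostant's theta-function identity, stated in the paper, written out for g = sl₂.) Let 0 < q < 1 and let λ ∈ ℂ with q^λ ≠ q^{−λ}. Then both series below converge absolutely and Σ_{n∈ℤ} q^{n²/2} q^{λn} = (1 − q²) · Σ_{m=0}^{∞} q^{m(m+2)/2} · ((q^{(m+1)λ} − q^{−(m+1)λ})/(q^λ − q^{−λ})) · ((q^{m+1} − q^{−(m+1)})/(q − q^{−1})). (On the right, (q^{(m+1)λ} − q^{−(m+1)λ})/(q^λ − q^{−λ}) is the character χ_m(q^{2λ}) of the (m+1)-dimensional irreducible sl₂-representation and (q^{m+1} − q^{−m−1})/(q − q^{−1}) = [m+1]_q is its quantum dimension.) -/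
/-!
Multiply the theta function `θ(λ) = ∑ₙ q^{n²/2 + λn}` by the two Weyl denominators
`q^λ - q^{-λ}` and `q - q⁻¹`. Expanding
`∑_{k ∈ ℤ} q^{k²/2} (q^{kλ} - q^{-kλ}) (q^k - q^{-k})` gives four shifted theta series
`θ(±λ ± 1)`, and since `θ` is the Jacobi theta function `jacobiTheta₂`, it is even and
quasi-periodic, `θ(z + 1) = q^{-z-1/2} θ(z)`; so this sum equals
`-2 q^{-1/2} (q^λ - q^{-λ}) θ(λ)`. Its summand is even in `k` and vanishes at `k = 0`, so
folding it onto `k = m + 1 ≥ 1` gives the sum over dominant weights `m`.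
-/

open MeasureTheory Finset Filter

/-- `qc q z = q^z := e^{z·log q}` for a real base `q > 0` and complex exponent. -/
noncomputable def qc (q : ℝ) (z : ℂ) : ℂ := Complex.exp ((Real.log q : ℂ) * z)

open Complex

theorem HasSum.two_nsmul_nat_succ_of_even {G : Type*} [AddCommGroup G] [TopologicalSpace G]
    [IsTopologicalAddGroup G] {f : ℤ → G} {a : G} (hf : HasSum f a) (heven : Function.Even f)
    (hf0 : f 0 = 0) : HasSum (fun n : ℕ ↦ 2 • f (n + 1)) a := by
  have h := hf.nat_add_neg
  simp only [heven _, hf0, add_zero, ← two_nsmul] at h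
  rw [← hasSum_nat_add_iff' 1] at h
  simpa [hf0] using h

lemma qc_add (q : ℝ) (x y : ℂ) : qc q (x + y) = qc q x * qc q y := by
  simp [qc, mul_add, exp_add]

lemma qc_neg (q : ℝ) (z : ℂ) : qc q (-z) = (qc q z)⁻¹ := by
  simp [qc, exp_neg]

lemma qc_one {q : ℝ} (hq0 : 0 < q) : qc q 1 = q := by
  rw [qc, mul_one, ← ofReal_exp, Real.exp_log hq0]

/-- `qc q z = exp (2πi · qTau q · z)`, so Gaussian series in `q` are Jacobi theta series with
modular parameter `qTau q`. -/
noncomputable def qTau (q : ℝ) : ℂ := Real.log q / (2 * Real.pi * I)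

noncomputable def qTheta (q : ℝ) (z : ℂ) : ℂ := jacobiTheta₂ (qTau q * z) (qTau q)

lemma qTau_im_pos {q : ℝ} (hq0 : 0 < q) (hq1 : q < 1) : 0 < (qTau q).im := by
  have hlog : Real.log q < 0 := Real.log_neg hq0 hq1
  have : qTau q = ((-Real.log q / (2 * Real.pi) : ℝ) : ℂ) * I := by
    rw [qTau, div_eq_iff (by simp [Real.pi_ne_zero])]
    push_cast
    field_simp
    rw [I_sq]
    ring
  rw [this, mul_I_im, ofReal_re]
  exact div_pos (neg_pos.mpr hlog) (by positivity)

lemma jacobiTheta₂_term_qTau (q : ℝ) (z : ℂ) (n : ℤ) :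
    jacobiTheta₂_term n (qTau q * z) (qTau q) = qc q ((n : ℂ) ^ 2 / 2 + z * n) := by
  rw [jacobiTheta₂_term, qc, qTau]
  congr 1
  field_simp
  ring

lemma hasSum_qTheta {q : ℝ} (hq0 : 0 < q) (hq1 : q < 1) (z : ℂ) :
    HasSum (fun n : ℤ ↦ qc q ((n : ℂ) ^ 2 / 2 + z * n)) (qTheta q z) := by
  simpa only [qTheta, jacobiTheta₂_term_qTau] using
    hasSum_jacobiTheta₂_term (qTau q * z) (qTau_im_pos hq0 hq1)

lemma qTheta_neg (q : ℝ) (z : ℂ) : qTheta q (-z) = qTheta q z := by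
  rw [qTheta, mul_neg, jacobiTheta₂_neg_left, qTheta]

lemma qTheta_add_one (q : ℝ) (z : ℂ) : qTheta q (z + 1) = qc q (-(z + 1 / 2)) * qTheta q z := by
  rw [qTheta, mul_add_one, jacobiTheta₂_add_left', qTheta, qc, qTau]
  congr 2
  field_simp
  ring

/-- With `k = m + 1`, the two differences are the Weyl numerators of `χ_m(q^{2z})` and of
`[m + 1]_q`. -/
noncomputable def weylTerm (q : ℝ) (z : ℂ) (k : ℤ) : ℂ :=
  qc q ((k : ℂ) ^ 2 / 2) * (qc q (k * z) - qc q (-(k * z))) * (qc q k - qc q (-k))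

lemma weylTerm_even (q : ℝ) (z : ℂ) : Function.Even (weylTerm q z) := by
  intro k
  simp only [weylTerm, Int.cast_neg, neg_sq, neg_mul, neg_neg]
  ring

lemma weylTerm_zero (q : ℝ) (z : ℂ) : weylTerm q z 0 = 0 := by
  simp [weylTerm]

lemma weylTerm_eq (q : ℝ) (z : ℂ) (k : ℤ) : weylTerm q z k =
    qc q ((k : ℂ) ^ 2 / 2 + (z + 1) * k) - qc q ((k : ℂ) ^ 2 / 2 + (z - 1) * k)
      - qc q ((k : ℂ) ^ 2 / 2 + (-z + 1) * k) + qc q ((k : ℂ) ^ 2 / 2 + (-z - 1) * k) := by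
  have hsplit (a b : ℂ) :
      (k : ℂ) ^ 2 / 2 + (a + b) * k = (k : ℂ) ^ 2 / 2 + k * a + k * b := by
    ring
  simp only [sub_eq_add_neg (-z), sub_eq_add_neg z, hsplit, qc_add, mul_neg, mul_one, qc_neg,
    weylTerm]
  ring

lemma hasSum_weylTerm {q : ℝ} (hq0 : 0 < q) (hq1 : q < 1) (z : ℂ) :
    HasSum (weylTerm q z) (-2 * qc q (-(1 / 2)) * (qc q z - qc q (-z)) * qTheta q z) := by
  have hsum := (((hasSum_qTheta hq0 hq1 (z + 1)).sub (hasSum_qTheta hq0 hq1 (z - 1))).sub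
    (hasSum_qTheta hq0 hq1 (-z + 1))).add (hasSum_qTheta hq0 hq1 (-z - 1))
  have hshift : qTheta q (-z + 1) = qc q (z - 1 / 2) * qTheta q z := by
    rw [qTheta_add_one, qTheta_neg]
    congr 2
    ring
  have hsub : qTheta q (z - 1) = qTheta q (-z + 1) := by
    rw [← qTheta_neg]
    congr 1
    ring
  have hsub' : qTheta q (-z - 1) = qTheta q (z + 1) := by
    rw [← qTheta_neg]
    congr 1
    ring
  have hval : qTheta q (z + 1) - qTheta q (z - 1) - qTheta q (-z + 1) + qTheta q (-z - 1) =
      -2 * qc q (-(1 / 2)) * (qc q z - qc q (-z)) * qTheta q z := by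
    rw [hsub, hsub', hshift, qTheta_add_one]
    simp only [sub_eq_add_neg, neg_add, qc_add]
    ring
  rw [hval] at hsum
  exact funext (weylTerm_eq q z) ▸ hsum

lemma hasSum_kostant_series {q : ℝ} (hq0 : 0 < q) (hq1 : q < 1) {lam : ℂ}
    (h : qc q lam ≠ qc q (-lam)) :
    HasSum (fun m : ℕ =>
      qc q ((m : ℂ) * ((m : ℂ) + 2) / 2) *
        ((qc q (((m : ℂ) + 1) * lam) - qc q (-(((m : ℂ) + 1) * lam))) /
          (qc q lam - qc q (-lam))) *
        ((qc q ((m : ℂ) + 1) - qc q (-((m : ℂ) + 1))) / (qc q 1 - qc q (-1))))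
      (qTheta q lam / (1 - (q : ℂ) ^ 2)) := by
  set P := qc q lam - qc q (-lam)
  set Q := qc q 1 - qc q (-1) with hQ
  have hP : P ≠ 0 := sub_ne_zero.mpr h
  have hq : (q : ℂ) ≠ 0 := ofReal_ne_zero.mpr hq0.ne'
  rw [qc_neg, qc_one hq0] at hQ
  have hQ0 : Q ≠ 0 := by
    rw [hQ, sub_ne_zero]
    exact_mod_cast (hq1.trans (one_lt_inv₀ hq0 |>.mpr hq1)).ne
  have hhalf : qc q (-(1 / 2)) * qc q (1 / 2) = 1 := by
    rw [← qc_add]; norm_num [qc]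
  have hhalf' : qc q (-(1 / 2)) * qc q (-(1 / 2)) = (q : ℂ)⁻¹ := by
    rw [← qc_add, show (-(1 / 2) + -(1 / 2) : ℂ) = -1 by ring, qc_neg, qc_one hq0]
  have hfold := ((hasSum_weylTerm hq0 hq1 lam).two_nsmul_nat_succ_of_even
    (weylTerm_even q lam) (weylTerm_zero q lam)).mul_left (qc q (-(1 / 2)) / (2 * P * Q))
  have hterm (m : ℕ) : qc q ((m : ℂ) * ((m : ℂ) + 2) / 2) *
        ((qc q (((m : ℂ) + 1) * lam) - qc q (-(((m : ℂ) + 1) * lam))) / P) *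
        ((qc q ((m : ℂ) + 1) - qc q (-((m : ℂ) + 1))) / Q) =
      qc q (-(1 / 2)) / (2 * P * Q) * (2 • weylTerm q lam ((m : ℤ) + 1)) := by
    rw [weylTerm, two_nsmul]
    push_cast
    rw [show ((m : ℂ) + 1) ^ 2 / 2 = 1 / 2 + m * (m + 2) / 2 by ring, qc_add q (1 / 2)]
    field_simp
    rw [mul_assoc _ (qc q (-(1 / 2))) (qc q (1 / 2)), hhalf]
    ring
  have hval : qc q (-(1 / 2)) / (2 * P * Q) *
      (-2 * qc q (-(1 / 2)) * P * qTheta q lam) =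
      qTheta q lam / (1 - (q : ℂ) ^ 2) := by
    have hQq : 1 - (q : ℂ) ^ 2 = -(q * Q) := by
      rw [hQ]
      field_simp
      ring
    calc _ = -(qc q (-(1 / 2)) * qc q (-(1 / 2))) * qTheta q lam / Q := by
          field_simp
      _ = _ := by
          rw [hhalf', hQq]
          field_simp
  rw [hval] at hfold
  exact funext hterm ▸ hfold

/-- **Kostant's theta-function identity** for `sl₂`: the theta function expands
as a sum over dominant weights of characters times quantum dimensions. -/
theorem kostant_identity (q : ℝ) (hq0 : 0 < q) (hq1 : q < 1) (lam : ℂ)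
    (h : qc q lam ≠ qc q (-lam)) :
    Summable (fun n : ℤ => qc q ((n : ℂ) ^ 2 / 2) * qc q (lam * (n : ℂ))) ∧
    Summable (fun m : ℕ =>
      qc q ((m : ℂ) * ((m : ℂ) + 2) / 2) *
        ((qc q (((m : ℂ) + 1) * lam) - qc q (-(((m : ℂ) + 1) * lam))) /
          (qc q lam - qc q (-lam))) *
        ((qc q ((m : ℂ) + 1) - qc q (-((m : ℂ) + 1))) / (qc q 1 - qc q (-1)))) ∧
    ∑' n : ℤ, qc q ((n : ℂ) ^ 2 / 2) * qc q (lam * (n : ℂ)) =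
      (1 - (q : ℂ) ^ 2) *
        ∑' m : ℕ,
          qc q ((m : ℂ) * ((m : ℂ) + 2) / 2) *
            ((qc q (((m : ℂ) + 1) * lam) - qc q (-(((m : ℂ) + 1) * lam))) /
              (qc q lam - qc q (-lam))) *
            ((qc q ((m : ℂ) + 1) - qc q (-((m : ℂ) + 1))) / (qc q 1 - qc q (-1))) := by
  have htheta : HasSum (fun n : ℤ => qc q ((n : ℂ) ^ 2 / 2) * qc q (lam * (n : ℂ)))
      (qTheta q lam) := by
    simpa only [qc_add] using hasSum_qTheta hq0 hq1 lam
  have hseries := hasSum_kostant_series hq0 hq1 h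
  have hq2 : 1 - (q : ℂ) ^ 2 ≠ 0 := by
    rw [sub_ne_zero, ne_comm]
    exact_mod_cast (pow_lt_one₀ hq0.le hq1 two_ne_zero).ne
  refine ⟨htheta.summable, hseries.summable, ?_⟩
  rw [htheta.tsum_eq, hseries.tsum_eq, mul_div_cancel₀ _ hq2]
end
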